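/- Let H be a Hopf quasigroup and M a Long H-dimodule. The linear map R: M⊗M → M⊗M defined by R(m⊗n) = n⁽¹⁾·m ⊗ n⁽⁰⁾ satisfies the D-equation R¹²∘R²³ = R²³∘R¹² on M⊗M⊗M, where R¹² = R⊗id and R²³ = id⊗R. -/
import Mathlib


open TensorProduct

/-- A Hopf quasigroup over a field `k`: a unital (not necessarily associative) algebra
and coassociative counital coalgebra, with `comul` and `counit` algebra maps, together
with an antipode `antipode` satisfying
`S(h₁)(h₂g) = h₁(S(h₂)g) = (gh₁)S(h₂) = (gS(h₁))h₂ = ε(h)g`. -/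
structure HopfQuasigroup (k : Type*) [Field k] (H : Type*) [AddCommMonoid H] [Module k H] where
  mul : H →ₗ[k] H →ₗ[k] H
  one : H
  comul : H →ₗ[k] H ⊗[k] H
  counit : H →ₗ[k] k
  antipode : H →ₗ[k] H
  one_mul : ∀ h, mul one h = h
  mul_one : ∀ h, mul h one = h
  coassoc : ∀ h, (TensorProduct.assoc k H H H) ((comul.rTensor H) (comul h))
      = (LinearMap.lTensor H comul) (comul h)
  counit_comul : ∀ h, (TensorProduct.lid k H) ((counit.rTensor H) (comul h)) = h
  comul_counit : ∀ h, (TensorProduct.rid k H) ((LinearMap.lTensor H counit) (comul h)) = h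
  counit_one : counit one = 1
  counit_mul : ∀ a b, counit (mul a b) = counit a * counit b
  comul_one : comul one = one ⊗ₜ[k] one
  comul_mul : ∀ a b, comul (mul a b)
      = (TensorProduct.map (TensorProduct.lift mul) (TensorProduct.lift mul))
          ((TensorProduct.tensorTensorTensorComm k H H H H) ((comul a) ⊗ₜ[k] (comul b)))
  -- `S(h₁)(h₂ g) = ε(h) g`
  antipode_mul_left : ∀ g h,
      TensorProduct.lift ((mul.comp antipode).compl₂ (mul.flip g)) (comul h) = counit h • g
  -- `h₁(S(h₂) g) = ε(h) g`
  mul_antipode_left : ∀ g h,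
      TensorProduct.lift (mul.compl₂ ((mul.comp antipode).flip g)) (comul h) = counit h • g
  -- `(g h₁)S(h₂) = ε(h) g`
  antipode_mul_right : ∀ g h,
      TensorProduct.lift ((mul.comp (mul g)).compl₂ antipode) (comul h) = counit h • g
  -- `(g S(h₁))h₂ = ε(h) g`
  mul_antipode_right : ∀ g h,
      TensorProduct.lift (mul.comp ((mul g).comp antipode)) (comul h) = counit h • g

variable {k H : Type*} [Field k] [AddCommMonoid H] [Module k H]

/-- A left quasimodule over a Hopf quasigroup: `1·m = m` and
`h₁·(S(h₂)·m) = ε(h)m = S(h₁)·(h₂·m)`. -/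
structure LeftQuasimodule (hq : HopfQuasigroup k H) (M : Type*)
    [AddCommMonoid M] [Module k M] where
  act : H →ₗ[k] M →ₗ[k] M
  act_one : ∀ m, act hq.one m = m
  -- `h₁·(S(h₂)·m) = ε(h) m`
  act_antipode : ∀ h m,
      TensorProduct.lift (act.compl₂ ((act.comp hq.antipode).flip m)) (hq.comul h)
        = hq.counit h • m
  -- `S(h₁)·(h₂·m) = ε(h) m`
  antipode_act : ∀ h m,
      TensorProduct.lift ((act.comp hq.antipode).compl₂ (act.flip m)) (hq.comul h)
        = hq.counit h • m

/-- A counital coassociative right comodule over a Hopf quasigroup. -/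
structure RightComodule (hq : HopfQuasigroup k H) (M : Type*)
    [AddCommMonoid M] [Module k M] where
  coact : M →ₗ[k] M ⊗[k] H
  coassoc : ∀ m, (TensorProduct.assoc k M H H) ((coact.rTensor H) (coact m))
      = (LinearMap.lTensor M hq.comul) (coact m)
  coact_counit : ∀ m, (TensorProduct.rid k M) ((LinearMap.lTensor M hq.counit) (coact m)) = m

/-- A Long dimodule over a Hopf quasigroup: a left quasimodule and a counital
coassociative right comodule such that `(h·m)⁽⁰⁾⊗(h·m)⁽¹⁾ = h·m⁽⁰⁾⊗m⁽¹⁾`. -/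
structure LongDimodule (hq : HopfQuasigroup k H) (M : Type*)
    [AddCommMonoid M] [Module k M] extends LeftQuasimodule hq M, RightComodule hq M where
  compat : ∀ h m, coact (act h m) = ((act h).rTensor H) (coact m)


/-- The map `R : M ⊗ M → M ⊗ M`, `m ⊗ n ↦ n⁽¹⁾·m ⊗ n⁽⁰⁾`, associated with a Long
dimodule. -/
noncomputable def dMap {hq : HopfQuasigroup k H} {M : Type*}
    [AddCommMonoid M] [Module k M] (ld : LongDimodule hq M) :
    M ⊗[k] M →ₗ[k] M ⊗[k] M :=
  ((TensorProduct.lift ld.act.flip).rTensor M).comp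
    (((TensorProduct.assoc k M H M).symm.toLinearMap).comp
      ((LinearMap.lTensor M ((TensorProduct.comm k M H).toLinearMap)).comp
        (LinearMap.lTensor M ld.coact)))

/-- `R ⊗ id` on `(M ⊗ M) ⊗ M`. -/
noncomputable def dMap12 {hq : HopfQuasigroup k H} {M : Type*}
    [AddCommMonoid M] [Module k M] (ld : LongDimodule hq M) :
    (M ⊗[k] M) ⊗[k] M →ₗ[k] (M ⊗[k] M) ⊗[k] M :=
  (dMap ld).rTensor M

/-- `id ⊗ R` on `(M ⊗ M) ⊗ M`. -/
noncomputable def dMap23 {hq : HopfQuasigroup k H} {M : Type*}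
    [AddCommMonoid M] [Module k M] (ld : LongDimodule hq M) :
    (M ⊗[k] M) ⊗[k] M →ₗ[k] (M ⊗[k] M) ⊗[k] M :=
  ((TensorProduct.assoc k M M M).symm.toLinearMap).comp
    ((LinearMap.lTensor M (dMap ld)).comp ((TensorProduct.assoc k M M M).toLinearMap))

section Helpers

variable {hq : HopfQuasigroup k H} {M : Type*} [AddCommMonoid M] [Module k M]
  (ld : LongDimodule hq M)

/-- The "core" of `dMap`, taking `m ⊗ (n₀ ⊗ n₁)` to `n₁·m ⊗ n₀`. -/
noncomputable def auxF : M ⊗[k] (M ⊗[k] H) →ₗ[k] M ⊗[k] M :=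
  ((TensorProduct.lift ld.act.flip).rTensor M).comp
    (((TensorProduct.assoc k M H M).symm.toLinearMap).comp
      (LinearMap.lTensor M ((TensorProduct.comm k M H).toLinearMap)))

lemma auxF_tmul (m n : M) (h : H) :
    auxF ld (m ⊗ₜ[k] (n ⊗ₜ[k] h)) = ld.act h m ⊗ₜ[k] n := by
  simp [auxF]

lemma dMap_tmul (m n : M) :
    dMap ld (m ⊗ₜ[k] n) = auxF ld (m ⊗ₜ[k] ld.coact n) := by
  simp [dMap, auxF]

/-- The map `a ⊗ b ↦ (assoc).symm (a ⊗ auxF (b ⊗ c))`, for a fixed `c : M ⊗ H`. -/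
noncomputable def theta (c : M ⊗[k] H) : M ⊗[k] M →ₗ[k] (M ⊗[k] M) ⊗[k] M :=
  ((TensorProduct.assoc k M M M).symm.toLinearMap).comp
    (LinearMap.lTensor M ((auxF ld).comp ((TensorProduct.mk k M (M ⊗[k] H)).flip c)))

lemma theta_tmul (c : M ⊗[k] H) (a b : M) :
    theta ld c (a ⊗ₜ[k] b)
      = (TensorProduct.assoc k M M M).symm (a ⊗ₜ[k] auxF ld (b ⊗ₜ[k] c)) := by
  simp [theta]

lemma theta_zero : theta ld (0 : M ⊗[k] H) = 0 := by
  simp [theta]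

lemma theta_add (c c' : M ⊗[k] H) :
    theta ld (c + c') = theta ld c + theta ld c' := by
  simp [theta, map_add, LinearMap.comp_add, LinearMap.add_comp, LinearMap.lTensor_add]

lemma dMap23_apply (x : M ⊗[k] M) (p : M) :
    dMap23 ld (x ⊗ₜ[k] p) = theta ld (ld.coact p) x := by
  induction x using TensorProduct.induction_on with
  | zero => simp [TensorProduct.zero_tmul]
  | tmul a b => simp [dMap23, theta, dMap_tmul]
  | add x y hx hy => simp [TensorProduct.add_tmul, hx, hy]

lemma dMap12_tmul (x : M ⊗[k] M) (p : M) :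
    dMap12 ld (x ⊗ₜ[k] p) = dMap ld x ⊗ₜ[k] p := by
  simp [dMap12]

end Helpers

/-- For a Long dimodule `M` over a Hopf quasigroup `H`, the map
`R(m⊗n) = n⁽¹⁾·m ⊗ n⁽⁰⁾` is a solution of Militaru's D-equation
`R¹² ∘ R²³ = R²³ ∘ R¹²`. -/
theorem longDimodule_d_equation {hq : HopfQuasigroup k H} {M : Type*}
    [AddCommMonoid M] [Module k M] (ld : LongDimodule hq M) :
    (dMap12 ld).comp (dMap23 ld) = (dMap23 ld).comp (dMap12 ld) := by
  apply TensorProduct.ext_threefold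
  intro m n p
  rw [LinearMap.comp_apply, LinearMap.comp_apply, dMap12_tmul, dMap23_apply,
    dMap23_apply, theta_tmul, dMap_tmul]
  induction ld.coact p using TensorProduct.induction_on with
  | zero =>
    simp [theta_zero]
  | tmul p₀ p₁ =>
    rw [auxF_tmul, TensorProduct.assoc_symm_tmul, dMap12_tmul, dMap_tmul, ld.compat]
    induction ld.coact n using TensorProduct.induction_on with
    | zero => simp
    | tmul n₀ n₁ =>
      rw [LinearMap.rTensor_tmul, auxF_tmul, auxF_tmul, theta_tmul, auxF_tmul,
        TensorProduct.assoc_symm_tmul]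
    | add d d' hd hd' =>
      simp only [map_add, TensorProduct.tmul_add, TensorProduct.add_tmul] at hd hd' ⊢
      rw [hd, hd']
  | add c c' hc hc' =>
    simp only [TensorProduct.tmul_add, map_add, theta_add, LinearMap.add_apply] at hc hc' ⊢
    rw [hc, hc']
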